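/- arXiv:1102.0213 — 5 statements merged into one kernel-verified Lean document; each statement's English description precedes it below -/
import Mathlib

section
/- Let M be a set, K : M × M → ℂ a positive definite kernel with reproducing kernel Hilbert space H_K, H a Hilbert space, and γ : M → H a map whose range spans a dense subspace of H and which satisfies ⟨γ(x), γ(y)⟩ = K(y,x) for all x, y ∈ M. Then the map Φ_γ : H → H_K defined by Φ_γ(v)(x) = ⟨v, γ(x)⟩ is a well-defined unitary isomorphism. -/
open scoped ComplexInnerProductSpace ComplexOrder

/-!
The kernel vectors `k m` of `H_K` and the vectors `γ m` of `H` are total families with the same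
Gram matrix `K`. A total family is determined by its Gram matrix up to a unique unitary: the
assignment `∑ l_m γ m ↦ ∑ l_m k m` is well defined and isometric on finite linear combinations,
hence extends by continuity. The reproducing property then turns `U (γ x) = k x` into
`Φ (U v) x = ⟪k x, U v⟫ = ⟪γ x, v⟫`.
-/

section Gram

variable {𝕜 ι E F : Type*} [RCLike 𝕜]
  [NormedAddCommGroup E] [InnerProductSpace 𝕜 E] [NormedAddCommGroup F] [InnerProductSpace 𝕜 F]

open Finsupp

theorem inner_linearCombination_eq_of_inner_eq {v : ι → E} {w : ι → F}
    (h : ∀ i j, inner 𝕜 (w i) (w j) = inner 𝕜 (v i) (v j)) (l₁ l₂ : ι →₀ 𝕜) :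
    inner 𝕜 (linearCombination 𝕜 w l₁) (linearCombination 𝕜 w l₂) =
      inner 𝕜 (linearCombination 𝕜 v l₁) (linearCombination 𝕜 v l₂) := by
  simp only [linearCombination_apply, Finsupp.sum_inner, Finsupp.inner_sum, inner_smul_left,
    inner_smul_right, h]

theorem norm_linearCombination_eq_of_inner_eq {v : ι → E} {w : ι → F}
    (h : ∀ i j, inner 𝕜 (w i) (w j) = inner 𝕜 (v i) (v j)) (l : ι →₀ 𝕜) :
    ‖linearCombination 𝕜 w l‖ = ‖linearCombination 𝕜 v l‖ := by
  rw [@norm_eq_sqrt_re_inner 𝕜, @norm_eq_sqrt_re_inner 𝕜, inner_linearCombination_eq_of_inner_eq h]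

theorem denseRange_linearCombination_iff {v : ι → E} :
    DenseRange (linearCombination 𝕜 v) ↔ Dense (Submodule.span 𝕜 (Set.range v) : Set E) := by
  rw [DenseRange, ← LinearMap.coe_range, range_linearCombination]

theorem exists_linearIsometryEquiv_of_inner_eq [CompleteSpace E] [CompleteSpace F]
    {v : ι → E} {w : ι → F}
    (hv : Dense (Submodule.span 𝕜 (Set.range v) : Set E))
    (hw : Dense (Submodule.span 𝕜 (Set.range w) : Set F))
    (h : ∀ i j, inner 𝕜 (w i) (w j) = inner 𝕜 (v i) (v j)) :
    ∃ U : E ≃ₗᵢ[𝕜] F, ∀ i, U (v i) = w i := by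
  have hU := (LinearEquiv.refl 𝕜 (ι →₀ 𝕜)).extendOfIsometry_eq _ _
    (denseRange_linearCombination_iff.2 hv) (denseRange_linearCombination_iff.2 hw)
    (norm_linearCombination_eq_of_inner_eq h)
  exact ⟨_, fun i => by
    simpa only [linearCombination_single, one_smul, LinearEquiv.refl_apply] using hU (single i 1)⟩

end Gram

theorem dense_span_of_forall_inner_eq_zero {𝕜 ι E : Type*} [RCLike 𝕜]
    [NormedAddCommGroup E] [InnerProductSpace 𝕜 E] [CompleteSpace E] {v : ι → E}
    (h : ∀ x, (∀ i, inner 𝕜 (v i) x = 0) → x = 0) :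
    Dense (Submodule.span 𝕜 (Set.range v) : Set E) := by
  rw [Submodule.dense_iff_topologicalClosure_eq_top, Submodule.topologicalClosure_eq_top_iff,
    Submodule.eq_bot_iff]
  exact fun x hx => h x fun i => hx (v i) (Submodule.subset_span ⟨i, rfl⟩)

/-- `H_K` is modelled by `E` with the injective map `Φ : E → (M → ℂ)`; `⟪·,·⟫` is conjugate-linear
in the first argument, so the paper's `⟨v, γ(x)⟩` is `⟪γ x, v⟫`. -/
theorem stmt_2_general {M E H : Type*}
    [NormedAddCommGroup E] [InnerProductSpace ℂ E] [CompleteSpace E]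
    [NormedAddCommGroup H] [InnerProductSpace ℂ H] [CompleteSpace H]
    (K : M → M → ℂ)
    (Φ : E →ₗ[ℂ] (M → ℂ)) (hΦ : Function.Injective Φ)
    (k : M → E)
    (hk : ∀ m : M, Φ (k m) = fun x => K x m)
    (hrepr : ∀ (f : E) (m : M), Φ f m = ⟪k m, f⟫)
    (γ : M → H)
    (htotal : Dense ((Submodule.span ℂ (Set.range γ) : Submodule ℂ H) : Set H))
    (hγ : ∀ x y : M, (⟪γ y, γ x⟫ : ℂ) = K y x) :
    ∃ U : H ≃ₗᵢ[ℂ] E, ∀ (v : H) (x : M), Φ (U v) x = ⟪γ x, v⟫ := by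
  have hgram : ∀ a b, ⟪k a, k b⟫ = ⟪γ a, γ b⟫ := fun a b => by
    rw [← hrepr, hk, hγ]
  have hk_total : Dense (Submodule.span ℂ (Set.range k) : Set E) :=
    dense_span_of_forall_inner_eq_zero fun f hf => hΦ <| by
      ext m
      rw [hrepr, hf, map_zero, Pi.zero_apply]
  obtain ⟨U, hU⟩ := exists_linearIsometryEquiv_of_inner_eq htotal hk_total hgram
  exact ⟨U, fun v x => by rw [hrepr, ← hU, U.inner_map_map]⟩

/-- Realization theorem for reproducing kernel Hilbert spaces: if `γ : M → H` has total range
and satisfies `⟨γ(x), γ(y)⟩ = K(y,x)`, then `Φ_γ(v)(x) = ⟨v, γ(x)⟩` defines a unitary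
isomorphism `H ≃ H_K`.  (Here `H_K` is realized as a Hilbert space `E` with an injective
linear map `Φ : E → (M → ℂ)` and kernel vectors `k m` with the reproducing property;
⟪·,·⟫ is conjugate-linear in the first argument, so the paper's `⟨v, γ(x)⟩` is `⟪γ x, v⟫`.) -/
theorem stmt_2 {M E H : Type*}
    [NormedAddCommGroup E] [InnerProductSpace ℂ E] [CompleteSpace E]
    [NormedAddCommGroup H] [InnerProductSpace ℂ H] [CompleteSpace H]
    (K : M → M → ℂ)
    (hpos : ∀ (n : ℕ) (x : Fin n → M),
      Matrix.PosSemidef (Matrix.of fun i j : Fin n => K (x i) (x j)))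
    (Φ : E →ₗ[ℂ] (M → ℂ)) (hΦ : Function.Injective Φ)
    (k : M → E)
    (hk : ∀ m : M, Φ (k m) = fun x => K x m)
    (hrepr : ∀ (f : E) (m : M), Φ f m = ⟪k m, f⟫)
    (γ : M → H)
    (htotal : Dense ((Submodule.span ℂ (Set.range γ) : Submodule ℂ H) : Set H))
    (hγ : ∀ x y : M, (⟪γ y, γ x⟫ : ℂ) = K y x) :
    ∃ U : H ≃ₗᵢ[ℂ] E, ∀ (v : H) (x : M), Φ (U v) x = ⟪γ x, v⟫ :=
  stmt_2_general K Φ hΦ k hk hrepr γ htotal hγ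
end

section
/- Let A and B be operators defined on a common dense domain D of a Banach space E whose closures generate strongly continuous one-parameter semigroups (e^{t·cl(A)})_{t≥0} and (e^{t·cl(B)})_{t≥0}. Assume e^{sA}D ⊆ D for all s ≥ 0, and that for some v ∈ D the map s ↦ B e^{sA}v is continuous on [0,∞). Then for all t ≥ 0: e^{t·cl(B)}v − e^{t·cl(A)}v = ∫₀ᵗ e^{s·cl(B)} (B − A) e^{(t−s)·cl(A)} v ds. -/
/-!
Put `f s = SB s (SA (t - s) v)`, so that `f t - f 0` is the left-hand side. By Banach–Steinhaus a
strongly continuous family of operators is uniformly bounded on compact time intervals, which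
makes `(s, w) ↦ S s w` jointly continuous there; hence `f` and the integrand are continuous on
`[0, t]`. Differentiating the two factors of `f` from the right gives
`f' s = SB s (B u - SA (t - s) (A v))` with `u = SA (t - s) v`, and `SA (t - s) (A v) = A u` because
a semigroup commutes with its generator on the invariant domain. The fundamental theorem of
calculus for right derivatives concludes.
-/

open Set Filter Topology

section UniformBound

variable {X 𝕜 E F : Type*} [TopologicalSpace X] [NontriviallyNormedField 𝕜]
  [NormedAddCommGroup E] [NormedSpace 𝕜 E] [CompleteSpace E]
  [NormedAddCommGroup F] [NormedSpace 𝕜 F] {S : X → E →L[𝕜] F} {K : Set X}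

theorem IsCompact.exists_forall_opNorm_le (hK : IsCompact K)
    (hS : ∀ w, ContinuousOn (fun x => S x w) K) : ∃ M, ∀ x ∈ K, ‖S x‖ ≤ M := by
  obtain ⟨M, hM⟩ := banach_steinhaus (g := fun x : K => S x) fun w =>
    (hK.exists_bound_of_continuousOn (hS w)).imp fun _ hC x => hC x x.2
  exact ⟨M, fun x hx => hM ⟨x, hx⟩⟩

theorem IsCompact.tendsto_apply (hK : IsCompact K) (hS : ∀ w, ContinuousOn (fun x => S x w) K)
    {ι : Type*} {l : Filter ι} {σ : ι → X} {x₀ : X} (hx₀ : x₀ ∈ K) (hσ : Tendsto σ l (𝓝[K] x₀))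
    {w : ι → E} {w₀ : E} (hw : Tendsto w l (𝓝 w₀)) :
    Tendsto (fun i => S (σ i) (w i)) l (𝓝 (S x₀ w₀)) := by
  obtain ⟨M, hM⟩ := hK.exists_forall_opNorm_le hS
  have hfixed : Tendsto (fun i => S (σ i) w₀) l (𝓝 (S x₀ w₀)) := (hS w₀ x₀ hx₀).tendsto.comp hσ
  have hdiff : Tendsto (fun i => S (σ i) (w i - w₀)) l (𝓝 0) := by
    refine squeeze_zero_norm' ?_ (by simpa using (hw.sub_const w₀).norm.const_mul M)
    filter_upwards [hσ.eventually self_mem_nhdsWithin] with i hi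
    exact (S (σ i)).le_of_opNorm_le (hM _ hi) _
  simpa using hdiff.add hfixed

theorem IsCompact.continuousOn_apply (hK : IsCompact K) (hS : ∀ w, ContinuousOn (fun x => S x w) K)
    {g : X → E} (hg : ContinuousOn g K) : ContinuousOn (fun x => S x (g x)) K :=
  fun x hx => hK.tendsto_apply hS hx tendsto_id (hg x hx)

end UniformBound

section Semigroup

variable {E : Type*} [NormedAddCommGroup E] [NormedSpace ℝ E] {S : ℝ → E →L[ℝ] E}

theorem apply_apply_of_semigroup
    (hsg : ∀ s t : ℝ, 0 ≤ s → 0 ≤ t → S (s + t) = (S s).comp (S t)) {a b : ℝ} (ha : 0 ≤ a)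
    (hb : 0 ≤ b) (w : E) : S a (S b w) = S (a + b) w := by
  rw [hsg a b ha hb, ContinuousLinearMap.comp_apply]

theorem hasDerivWithinAt_orbit_apply
    (hsg : ∀ s t : ℝ, 0 ≤ s → 0 ≤ t → S (s + t) = (S s).comp (S t)) {r : ℝ} (hr : 0 ≤ r)
    {w a : E} (ha : HasDerivWithinAt (fun h => S h w) a (Ici 0) 0) :
    HasDerivWithinAt (fun h => S h (S r w)) (S r a) (Ici 0) 0 := by
  have hcomm : ∀ h ∈ Ici (0 : ℝ), S h (S r w) = S r (S h w) := fun h hh => by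
    rw [apply_apply_of_semigroup hsg hh hr, apply_apply_of_semigroup hsg hr hh, add_comm]
  exact ((S r).hasFDerivAt.comp_hasDerivWithinAt 0 ha).congr_of_mem hcomm self_mem_Ici

variable [CompleteSpace E]

theorem hasDerivWithinAt_Iio_orbit
    (hsg : ∀ s t : ℝ, 0 ≤ s → 0 ≤ t → S (s + t) = (S s).comp (S t))
    (hcont : ∀ w, ContinuousOn (fun t => S t w) (Ici 0)) {r : ℝ} (hr : 0 < r) {w a : E}
    (ha : HasDerivWithinAt (fun h => S h w) a (Ici 0) 0) :
    HasDerivWithinAt (fun t => S t w) (S r a) (Iio r) r := by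
  rw [hasDerivWithinAt_iff_tendsto_slope' self_notMem_Iio]
  have hslope := (hasDerivWithinAt_iff_tendsto_slope' self_notMem_Ioi).1
    (hasDerivWithinAt_Ioi_iff_Ici.2 ha)
  have hshift : Tendsto (r - ·) (𝓝[<] r) (𝓝[>] 0) := by
    rw [← sub_self r]
    exact map_subLeft_nhdsLT.le
  have hσ : Tendsto id (𝓝[<] r) (𝓝[Icc 0 r] r) :=
    tendsto_id.mono_left (nhdsWithin_le_of_mem (Icc_mem_nhdsLT hr))
  refine (isCompact_Icc.tendsto_apply (fun w => (hcont w).mono Icc_subset_Ici_self)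
    ⟨hr.le, le_rfl⟩ hσ (hslope.comp hshift)).congr' ?_
  filter_upwards [Ioo_mem_nhdsLT hr] with τ hτ
  rw [slope_comm]
  simp only [Function.comp_apply, id_eq, slope_def_module, map_smul, map_sub, sub_zero,
    apply_apply_of_semigroup hsg hτ.1.le (sub_nonneg.2 hτ.2.le),
    apply_apply_of_semigroup hsg hτ.1.le le_rfl, add_sub_cancel, add_zero]

theorem hasDerivWithinAt_Ioi_apply
    (hsg : ∀ s t : ℝ, 0 ≤ s → 0 ≤ t → S (s + t) = (S s).comp (S t))
    (hcont : ∀ w, ContinuousOn (fun t => S t w) (Ici 0)) {s : ℝ} (hs : 0 ≤ s)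
    {g : ℝ → E} {g' b : E} (hg : HasDerivWithinAt g g' (Ioi s) s)
    (hb : HasDerivWithinAt (fun h => S h (g s)) b (Ici 0) 0) :
    HasDerivWithinAt (fun r => S r (g r)) (S s (g' + b)) (Ioi s) s := by
  rw [hasDerivWithinAt_iff_tendsto_slope' self_notMem_Ioi] at hg ⊢
  have hslope := (hasDerivWithinAt_iff_tendsto_slope' self_notMem_Ioi).1
    (hasDerivWithinAt_Ioi_iff_Ici.2 hb)
  have hshift : Tendsto (· - s) (𝓝[>] s) (𝓝[>] 0) := by
    rw [← sub_self s]
    exact map_subRight_nhdsGT.le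
  have hσ : Tendsto id (𝓝[>] s) (𝓝[Icc 0 (s + 1)] s) :=
    tendsto_id.mono_left (nhdsWithin_le_of_mem (Icc_mem_nhdsGT_of_mem ⟨hs, lt_add_one s⟩))
  have hfirst : Tendsto (fun r => S r (slope g s r)) (𝓝[>] s) (𝓝 (S s g')) :=
    isCompact_Icc.tendsto_apply (fun w => (hcont w).mono Icc_subset_Ici_self)
      ⟨hs, (lt_add_one s).le⟩ hσ hg
  have hsecond := ((S s).continuous.tendsto b).comp (hslope.comp hshift)
  rw [map_add]
  refine (hfirst.add hsecond).congr' ?_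
  filter_upwards [self_mem_nhdsWithin] with r (hr : s < r)
  simp only [Function.comp_apply, slope_def_module, map_smul, map_sub, sub_zero,
    apply_apply_of_semigroup hsg hs (sub_nonneg.2 hr.le), apply_apply_of_semigroup hsg hs le_rfl,
    add_sub_cancel, add_zero]
  rw [← smul_add, sub_add_sub_cancel]

end Semigroup

theorem stmt_9_general {E : Type*} [NormedAddCommGroup E] [NormedSpace ℝ E] [CompleteSpace E]
    (D : Submodule ℝ E)
    (A B : E →ₗ[ℝ] E)
    (SA SB : ℝ → E →L[ℝ] E)
    (hSA0 : SA 0 = 1) (hSB0 : SB 0 = 1)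
    (hSAsg : ∀ s t : ℝ, 0 ≤ s → 0 ≤ t → SA (s + t) = (SA s).comp (SA t))
    (hSBsg : ∀ s t : ℝ, 0 ≤ s → 0 ≤ t → SB (s + t) = (SB s).comp (SB t))
    (hSAcont : ∀ w : E, ContinuousOn (fun t => SA t w) (Set.Ici (0 : ℝ)))
    (hSBcont : ∀ w : E, ContinuousOn (fun t => SB t w) (Set.Ici (0 : ℝ)))
    (hSAgen : ∀ w ∈ D, HasDerivWithinAt (fun t : ℝ => SA t w) (A w) (Set.Ici (0 : ℝ)) 0)
    (hSBgen : ∀ w ∈ D, HasDerivWithinAt (fun t : ℝ => SB t w) (B w) (Set.Ici (0 : ℝ)) 0)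
    (hinv : ∀ s : ℝ, 0 ≤ s → ∀ w ∈ D, SA s w ∈ D)
    (v : E) (hv : v ∈ D)
    (hBcont : ContinuousOn (fun s => B (SA s v)) (Set.Ici (0 : ℝ))) :
    ∀ t : ℝ, 0 ≤ t →
      SB t v - SA t v =
        ∫ s in (0 : ℝ)..t, SB s (B (SA (t - s) v) - A (SA (t - s) v)) := by
  intro t ht
  have hcomm : ∀ r, 0 ≤ r → A (SA r v) = SA r (A v) := fun r hr =>
    (uniqueDiffWithinAt_Ici 0).eq_deriv _ (hSAgen _ (hinv r hr v hv))
      (hasDerivWithinAt_orbit_apply hSAsg hr (hSAgen v hv))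
  have hmaps : MapsTo (t - ·) (Icc 0 t) (Ici 0) := fun s hs => sub_nonneg.2 hs.2
  have hsub : ContinuousOn (t - ·) (Icc 0 t) := by fun_prop
  have hSBcont' : ∀ w, ContinuousOn (fun s => SB s w) (Icc 0 t) :=
    fun w => (hSBcont w).mono Icc_subset_Ici_self
  have hf : ContinuousOn (fun s => SB s (SA (t - s) v)) (Icc 0 t) :=
    isCompact_Icc.continuousOn_apply hSBcont' ((hSAcont v).comp hsub hmaps)
  have hφ : ContinuousOn (fun s => SB s (B (SA (t - s) v) - A (SA (t - s) v))) (Icc 0 t) := by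
    refine isCompact_Icc.continuousOn_apply hSBcont' ((hBcont.comp hsub hmaps).sub ?_)
    exact ((hSAcont (A v)).comp hsub hmaps).congr fun s hs => hcomm _ (hmaps hs)
  have hderiv : ∀ s ∈ Ioo 0 t, HasDerivWithinAt (fun s => SB s (SA (t - s) v))
      (SB s (B (SA (t - s) v) - A (SA (t - s) v))) (Ioi s) s := by
    intro s hs
    have hu : HasDerivWithinAt (fun r => SA (t - r) v) (-SA (t - s) (A v)) (Ioi s) s := by
      simpa [Function.comp_def] using (hasDerivWithinAt_Iio_orbit hSAsg hSAcont (sub_pos.2 hs.2)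
        (hSAgen v hv)).scomp s ((hasDerivWithinAt_id s (Ioi s)).const_sub t)
        fun r hr => sub_lt_sub_left hr t
    convert hasDerivWithinAt_Ioi_apply hSBsg hSBcont hs.1.le hu
      (hSBgen _ (hinv _ (sub_nonneg.2 hs.2.le) v hv)) using 2
    rw [hcomm _ (sub_nonneg.2 hs.2.le)]
    abel
  rw [intervalIntegral.integral_eq_sub_of_hasDeriv_right_of_le ht hf hderiv
    (hφ.intervalIntegrable_of_Icc ht)]
  simp [hSA0, hSB0]

/-- Duhamel-type formula: let `A`, `B` be operators on a dense domain `D` of a Banach space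
`E` whose closures generate strongly continuous semigroups `SA`, `SB`, with `SA(s) D ⊆ D`
for `s ≥ 0`, and let `v ∈ D` be such that `s ↦ B SA(s) v` is continuous on `[0,∞)`.
Then `SB(t)v − SA(t)v = ∫₀ᵗ SB(s) (B − A) SA(t−s) v ds` for all `t ≥ 0`. -/
theorem stmt_9 {E : Type*} [NormedAddCommGroup E] [NormedSpace ℝ E] [CompleteSpace E]
    (D : Submodule ℝ E) (hD : Dense (D : Set E))
    (A B : E →ₗ[ℝ] E)
    (SA SB : ℝ → E →L[ℝ] E)
    (hSA0 : SA 0 = 1) (hSB0 : SB 0 = 1)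
    (hSAsg : ∀ s t : ℝ, 0 ≤ s → 0 ≤ t → SA (s + t) = (SA s).comp (SA t))
    (hSBsg : ∀ s t : ℝ, 0 ≤ s → 0 ≤ t → SB (s + t) = (SB s).comp (SB t))
    (hSAcont : ∀ w : E, ContinuousOn (fun t => SA t w) (Set.Ici (0 : ℝ)))
    (hSBcont : ∀ w : E, ContinuousOn (fun t => SB t w) (Set.Ici (0 : ℝ)))
    (hSAgen : ∀ w ∈ D, HasDerivWithinAt (fun t : ℝ => SA t w) (A w) (Set.Ici (0 : ℝ)) 0)
    (hSBgen : ∀ w ∈ D, HasDerivWithinAt (fun t : ℝ => SB t w) (B w) (Set.Ici (0 : ℝ)) 0)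
    (hinv : ∀ s : ℝ, 0 ≤ s → ∀ w ∈ D, SA s w ∈ D)
    (v : E) (hv : v ∈ D)
    (hBcont : ContinuousOn (fun s => B (SA s v)) (Set.Ici (0 : ℝ))) :
    ∀ t : ℝ, 0 ≤ t →
      SB t v - SA t v =
        ∫ s in (0 : ℝ)..t, SB s (B (SA (t - s) v) - A (SA (t - s) v)) :=
  stmt_9_general D A B SA SB hSA0 hSB0 hSAsg hSBsg hSAcont hSBcont hSAgen hSBgen hinv v hv hBcont
end

section
/- Let (ρ_t)_{t>0} be a strongly continuous one-parameter semigroup of bounded self-adjoint (hermitian) operators on a Hilbert space H, i.e., ρ_{s+t} = ρ_s ρ_t, ρ_t* = ρ_t, which is non-degenerate in the sense that ρ_t v = 0 for all t > 0 implies v = 0. Then lim_{t→0⁺} ρ_t v = v for all v ∈ H. -/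
open Filter Set Topology

/-! Self-adjointness gives `‖ρ t v‖ ^ 2 = ⟪v, ρ (2 * t) v⟫ ≤ ‖ρ (2 * t) v‖ * ‖v‖`, so a bound for
`t ∈ [1, 2]` propagates by halving to all of `(0, 1]`, and Banach–Steinhaus makes it uniform in `v`.
Hence the vectors `v` with `ρ t v → v` form a closed subspace. It contains every `ρ s w` by
continuity at `s`, and these span a dense subspace: a vector orthogonal to all of them lies in the
kernel of every `ρ t = (ρ t)†`. -/

section TendstoSelf

variable {𝕜 E ι : Type*} [NontriviallyNormedField 𝕜] [SeminormedAddCommGroup E] [NormedSpace 𝕜 E]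

def tendstoSelfSubmodule (T : ι → E →L[𝕜] E) (l : Filter ι) : Submodule 𝕜 E where
  carrier := {v | Tendsto (fun i => T i v) l (𝓝 v)}
  add_mem' {v w} hv hw := by simpa only [mem_ofPred_eq, map_add] using hv.add hw
  zero_mem' := by simpa only [mem_ofPred_eq, map_zero] using tendsto_const_nhds
  smul_mem' c v hv := by simpa only [mem_ofPred_eq, map_smul] using hv.const_smul c

theorem isClosed_tendstoSelfSubmodule {T : ι → E →L[𝕜] E} {l : Filter ι} {M : ℝ}
    (hT : ∀ᶠ i in l, ‖T i‖ ≤ M) : IsClosed (tendstoSelfSubmodule T l : Set E) := by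
  set s := {i | ‖T i‖ ≤ M}
  have hequi : Equicontinuous fun i : s => (T i : E → E) :=
    ((NormedSpace.equicontinuous_TFAE fun i : s => T i).out 5 1).mp
      (⟨M, fun i => i.2⟩ : ∃ C, ∀ i : s, ‖T i‖ ≤ C)
  convert hequi.isClosed_setOfPred_tendsto (l := comap (↑) l) continuous_id using 1
  ext v
  change Tendsto (fun i => T i v) l (𝓝 v) ↔
    Tendsto ((fun i => T i v) ∘ ((↑) : s → ι)) (comap (↑) l) (𝓝 v)
  rw [← tendsto_map'_iff, map_comap_of_mem (by rw [Subtype.range_coe]; exact hT)]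

theorem semigroup_apply_mem_tendstoSelfSubmodule {ρ : ℝ → E →L[𝕜] E}
    (hsg : ∀ s t : ℝ, 0 < s → 0 < t → ρ (s + t) = (ρ s).comp (ρ t)) {w : E}
    (hcont : ContinuousOn (fun t => ρ t w) (Ioi 0)) {s : ℝ} (hs : 0 < s) :
    ρ s w ∈ tendstoSelfSubmodule ρ (𝓝[>] 0) := by
  have hshift : Tendsto (· + s) (𝓝[>] (0 : ℝ)) (𝓝 s) := by
    simpa using (tendsto_id.add_const s).mono_left (nhdsWithin_le_nhds (a := (0 : ℝ)))
  refine ((hcont.continuousAt (Ioi_mem_nhds hs)).tendsto.comp hshift).congr' ?_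
  filter_upwards [self_mem_nhdsWithin] with t ht
  simp [hsg t s ht hs]

end TendstoSelf

theorem le_of_sq_le_mul_two_mul {f : ℝ → ℝ} {B : ℝ} (hB : 0 ≤ B)
    (hsq : ∀ t, 0 < t → f t ^ 2 ≤ f (2 * t) * B) (hbase : ∀ t ∈ Icc 1 2, f t ≤ B) :
    ∀ t ∈ Ioc 0 2, f t ≤ B := by
  have key : ∀ n : ℕ, ∀ t ∈ Icc ((1 / 2 : ℝ) ^ n) 2, f t ≤ B := by
    intro n
    induction n with
    | zero => simpa using hbase
    | succ n ih =>
      rintro t ⟨hlo, hhi⟩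
      rcases le_or_gt 1 t with h1 | h1
      · exact hbase t ⟨h1, hhi⟩
      · have h2t : f (2 * t) ≤ B := ih _ ⟨by rw [pow_succ] at hlo; linarith, by linarith⟩
        have ht : 0 < t := lt_of_lt_of_le (by positivity) hlo
        nlinarith [hsq t ht, mul_le_mul_of_nonneg_right h2t hB]
  rintro t ⟨ht0, ht2⟩
  obtain ⟨n, hn⟩ := exists_pow_lt_of_lt_one ht0 (by norm_num : (1 / 2 : ℝ) < 1)
  exact key n t ⟨hn.le, ht2⟩

section SelfAdjointSemigroup

variable {𝕜 E : Type*} [RCLike 𝕜] [NormedAddCommGroup E] [InnerProductSpace 𝕜 E] [CompleteSpace E]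

theorem IsSelfAdjoint.norm_apply_sq_le {T : E →L[𝕜] E} (hT : IsSelfAdjoint T) (v : E) :
    ‖T v‖ ^ 2 ≤ ‖T (T v)‖ * ‖v‖ := by
  calc ‖T v‖ ^ 2 = RCLike.re (inner 𝕜 v (T (T v))) := by
        rw [← hT.isSymmetric.apply_clm, ← inner_self_eq_norm_sq (𝕜 := 𝕜)]
    _ ≤ ‖v‖ * ‖T (T v)‖ := (RCLike.re_le_norm _).trans (norm_inner_le_norm _ _)
    _ = ‖T (T v)‖ * ‖v‖ := mul_comm _ _

variable {ρ : ℝ → E →L[𝕜] E}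

theorem exists_norm_apply_le_of_selfAdjoint_semigroup
    (hsg : ∀ s t : ℝ, 0 < s → 0 < t → ρ (s + t) = (ρ s).comp (ρ t))
    (hsa : ∀ t : ℝ, 0 < t → IsSelfAdjoint (ρ t)) {v : E}
    (hcont : ContinuousOn (fun t => ρ t v) (Icc 1 2)) :
    ∃ C, ∀ t ∈ Ioc (0 : ℝ) 1, ‖ρ t v‖ ≤ C := by
  obtain ⟨K, hK⟩ := isCompact_Icc.exists_bound_of_continuousOn hcont
  have hdouble : ∀ t, 0 < t → ‖ρ t v‖ ^ 2 ≤ ‖ρ (2 * t) v‖ * max K ‖v‖ := fun t ht =>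
    calc ‖ρ t v‖ ^ 2 ≤ ‖ρ (2 * t) v‖ * ‖v‖ := by
          simpa [two_mul, hsg t t ht ht] using (hsa t ht).norm_apply_sq_le v
      _ ≤ ‖ρ (2 * t) v‖ * max K ‖v‖ := by gcongr; exact le_max_right _ _
  refine ⟨max K ‖v‖, fun t ht => le_of_sq_le_mul_two_mul (le_max_of_le_right (norm_nonneg v))
    hdouble (fun s hs => (hK s hs).trans (le_max_left _ _)) t ⟨ht.1, by linarith [ht.2]⟩⟩

theorem exists_norm_le_of_selfAdjoint_semigroup
    (hsg : ∀ s t : ℝ, 0 < s → 0 < t → ρ (s + t) = (ρ s).comp (ρ t))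
    (hsa : ∀ t : ℝ, 0 < t → IsSelfAdjoint (ρ t))
    (hcont : ∀ v : E, ContinuousOn (fun t => ρ t v) (Ioi 0)) :
    ∃ M, ∀ t ∈ Ioc (0 : ℝ) 1, ‖ρ t‖ ≤ M := by
  obtain ⟨M, hM⟩ := banach_steinhaus (g := fun t : Ioc (0 : ℝ) 1 => ρ t) fun v => by
    obtain ⟨C, hC⟩ := exists_norm_apply_le_of_selfAdjoint_semigroup hsg hsa
      ((hcont v).mono fun t ht => one_pos.trans_le ht.1)
    exact ⟨C, fun t => hC t t.2⟩
  exact ⟨M, fun t ht => hM ⟨t, ht⟩⟩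

theorem topologicalClosure_iSup_range_eq_top
    (hsa : ∀ t : ℝ, 0 < t → IsSelfAdjoint (ρ t))
    (hnondeg : ∀ v : E, (∀ t : ℝ, 0 < t → ρ t v = 0) → v = 0) :
    (⨆ t : Ioi (0 : ℝ), LinearMap.range (ρ t : E →ₗ[𝕜] E)).topologicalClosure = ⊤ := by
  rw [Submodule.topologicalClosure_eq_top_iff, Submodule.eq_bot_iff]
  refine fun u hu => hnondeg u fun t ht => ?_
  have hu' : u ∈ (LinearMap.range (ρ t : E →ₗ[𝕜] E))ᗮ :=
    Submodule.orthogonal_le (le_iSup_of_le ⟨t, ht⟩ le_rfl) hu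
  rwa [ContinuousLinearMap.orthogonal_range, (hsa t ht).adjoint_eq] at hu'

end SelfAdjointSemigroup

theorem stmt_11_general {H : Type*} [NormedAddCommGroup H] [InnerProductSpace ℂ H] [CompleteSpace H]
    (ρ : ℝ → H →L[ℂ] H)
    (hsg : ∀ s t : ℝ, 0 < s → 0 < t → ρ (s + t) = (ρ s).comp (ρ t))
    (hsa : ∀ t : ℝ, 0 < t → IsSelfAdjoint (ρ t))
    (hcont : ∀ v : H, ContinuousOn (fun t => ρ t v) (Set.Ioi (0 : ℝ)))
    (hnondeg : ∀ v : H, (∀ t : ℝ, 0 < t → ρ t v = 0) → v = 0) :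
    ∀ v : H, Filter.Tendsto (fun t => ρ t v) (nhdsWithin 0 (Set.Ioi (0 : ℝ))) (nhds v) := by
  obtain ⟨M, hM⟩ := exists_norm_le_of_selfAdjoint_semigroup hsg hsa hcont
  have hclosed : IsClosed (tendstoSelfSubmodule ρ (𝓝[>] 0) : Set H) :=
    isClosed_tendstoSelfSubmodule <| eventually_of_mem (Ioc_mem_nhdsGT one_pos) hM
  have hrange : (⨆ t : Ioi (0 : ℝ), LinearMap.range (ρ t : H →ₗ[ℂ] H)) ≤
      tendstoSelfSubmodule ρ (𝓝[>] 0) :=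
    iSup_le fun t => by
      rintro _ ⟨w, rfl⟩
      exact semigroup_apply_mem_tendstoSelfSubmodule hsg (hcont w) t.2
  have htop := Submodule.topologicalClosure_minimal _ hrange hclosed
  rw [topologicalClosure_iSup_range_eq_top hsa hnondeg, top_le_iff] at htop
  exact (Submodule.eq_top_iff'.mp htop ·)

/-- A strongly continuous, locally norm-bounded, non-degenerate one-parameter semigroup
`(ρ_t)_{t>0}` of bounded self-adjoint operators on a Hilbert space satisfies
`ρ_t v → v` as `t → 0⁺` for every `v`. -/
theorem stmt_11 {H : Type*} [NormedAddCommGroup H] [InnerProductSpace ℂ H] [CompleteSpace H]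
    (ρ : ℝ → H →L[ℂ] H)
    (hsg : ∀ s t : ℝ, 0 < s → 0 < t → ρ (s + t) = (ρ s).comp (ρ t))
    (hsa : ∀ t : ℝ, 0 < t → IsSelfAdjoint (ρ t))
    (hcont : ∀ v : H, ContinuousOn (fun t => ρ t v) (Set.Ioi (0 : ℝ)))
    (hbdd : ∀ t : ℝ, 0 < t → ∃ ε > (0 : ℝ), ∃ C : ℝ,
      ∀ s : ℝ, 0 < s → |s - t| < ε → ‖ρ s‖ ≤ C)
    (hnondeg : ∀ v : H, (∀ t : ℝ, 0 < t → ρ t v = 0) → v = 0) :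
    ∀ v : H, Filter.Tendsto (fun t => ρ t v) (nhdsWithin 0 (Set.Ioi (0 : ℝ))) (nhds v) :=
  stmt_11_general ρ hsg hsa hcont hnondeg
end

section
/- Let G be a Banach–Lie group with Lie algebra g and (π, H) a smooth unitary representation. Define s_π : g → ℝ ∪ {∞} by s_π(x) = sup Spec(i·cl(dπ(x))). Then the set W_π of all x ∈ g such that s_π is bounded on some neighborhood of x is an open convex cone in g, invariant under the adjoint action Ad(G). -/
/-!
Near a point `x` of `W_π` the function `s_π` is bounded above by some `C`. Subadditivity gives
`s_π z ≤ s_π (z - y) + s_π y`, so `s_π` is bounded near `x + y` by `C + s_π y`; positive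
homogeneity gives `s_π z = t s_π (t⁻¹ z)`, so it is bounded near `t x` by `t C`; and
`s_π z = s_π (Ad(g)⁻¹ z)` bounds it near `Ad(g) x`. Hence `W_π` is a convex cone, stable under
`Ad(G)`, and it is open because the bound on a neighbourhood of `x` holds near each of its points.
-/

open Filter Topology

/-- `W_π` when `s = s_π`. -/
def locBddAboveSet {X : Type*} [TopologicalSpace X] (s : X → EReal) : Set X :=
  {x | ∃ U ∈ 𝓝 x, ∃ C : ℝ, ∀ y ∈ U, s y ≤ (C : EReal)}

section TopologicalSpace

variable {X : Type*} [TopologicalSpace X] {s : X → EReal}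

theorem mem_locBddAboveSet_iff {x : X} :
    x ∈ locBddAboveSet s ↔ ∃ C : ℝ, ∀ᶠ y in 𝓝 x, s y ≤ (C : EReal) :=
  ⟨fun ⟨_, hU, C, hC⟩ => ⟨C, mem_of_superset hU hC⟩, fun ⟨C, h⟩ => ⟨_, h, C, fun _ hy => hy⟩⟩

theorem isOpen_locBddAboveSet (s : X → EReal) : IsOpen (locBddAboveSet s) := by
  refine isOpen_iff_eventually.2 fun x hx => ?_
  obtain ⟨C, hC⟩ := mem_locBddAboveSet_iff.1 hx
  exact hC.eventually_nhds.mono fun y hy => mem_locBddAboveSet_iff.2 ⟨C, hy⟩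

theorem Homeomorph.mem_locBddAboveSet (φ : X ≃ₜ X) (hφ : ∀ x, s (φ x) = s x) {x : X}
    (hx : x ∈ locBddAboveSet s) : φ x ∈ locBddAboveSet s := by
  obtain ⟨C, hC⟩ := mem_locBddAboveSet_iff.1 hx
  have hφsymm : Tendsto φ.symm (𝓝 (φ x)) (𝓝 x) := by
    simpa using φ.symm.continuous.tendsto (φ x)
  refine mem_locBddAboveSet_iff.2 ⟨C, (hφsymm.eventually hC).mono fun z hz => ?_⟩
  rwa [← hφ, φ.apply_symm_apply] at hz

end TopologicalSpace

section TopologicalVectorSpace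

variable {E : Type*} [AddCommGroup E] [TopologicalSpace E] {s : E → EReal}

theorem add_mem_locBddAboveSet [IsTopologicalAddGroup E] (hsub : ∀ x y : E, s (x + y) ≤ s x + s y) {x y : E}
    (hx : x ∈ locBddAboveSet s) (hy : y ∈ locBddAboveSet s) : x + y ∈ locBddAboveSet s := by
  obtain ⟨C, hC⟩ := mem_locBddAboveSet_iff.1 hx
  obtain ⟨D, hD⟩ := mem_locBddAboveSet_iff.1 hy
  have hsub_y : Tendsto (fun z => z - y) (𝓝 (x + y)) (𝓝 x) := by
    simpa using (continuous_sub_right y).tendsto (x + y)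
  refine mem_locBddAboveSet_iff.2 ⟨C + D, (hsub_y.eventually hC).mono fun z hz => ?_⟩
  calc s z = s (z - y + y) := by rw [sub_add_cancel]
    _ ≤ s (z - y) + s y := hsub _ _
    _ ≤ C + D := add_le_add hz hD.self_of_nhds
    _ = ((C + D : ℝ) : EReal) := (EReal.coe_add C D).symm

theorem smul_mem_locBddAboveSet [Module ℝ E] [ContinuousConstSMul ℝ E]
    (hhom : ∀ t : ℝ, 0 < t → ∀ x : E, s (t • x) = (t : EReal) * s x) {t : ℝ} (ht : 0 < t)
    {x : E} (hx : x ∈ locBddAboveSet s) : t • x ∈ locBddAboveSet s := by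
  obtain ⟨C, hC⟩ := mem_locBddAboveSet_iff.1 hx
  have hsmul_inv : Tendsto (fun z => t⁻¹ • z) (𝓝 (t • x)) (𝓝 x) := by
    simpa [inv_smul_smul₀ ht.ne'] using (continuous_const_smul t⁻¹).tendsto (t • x)
  refine mem_locBddAboveSet_iff.2 ⟨t * C, (hsmul_inv.eventually hC).mono fun z hz => ?_⟩
  calc s z = s (t • t⁻¹ • z) := by rw [smul_inv_smul₀ ht.ne']
    _ = t * s (t⁻¹ • z) := hhom t ht _
    _ ≤ t * C := mul_le_mul_of_nonneg_left hz (EReal.coe_nonneg.2 ht.le)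
    _ = ((t * C : ℝ) : EReal) := (EReal.coe_mul t C).symm

def locBddAboveCone [IsTopologicalAddGroup E] [Module ℝ E] [ContinuousConstSMul ℝ E] (hsub : ∀ x y : E, s (x + y) ≤ s x + s y)
    (hhom : ∀ t : ℝ, 0 < t → ∀ x : E, s (t • x) = (t : EReal) * s x) : ConvexCone ℝ E where
  carrier := locBddAboveSet s
  smul_mem' _ ht _ hx := smul_mem_locBddAboveSet hhom ht hx
  add_mem' _ hx _ hy := add_mem_locBddAboveSet hsub hx hy

end TopologicalVectorSpace

theorem stmt_14_general {G 𝔤 : Type*} [NormedAddCommGroup 𝔤] [NormedSpace ℝ 𝔤]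
    (Ad : G → 𝔤 ≃L[ℝ] 𝔤)
    (s : 𝔤 → EReal)
    (hsub : ∀ x y : 𝔤, s (x + y) ≤ s x + s y)
    (hhom : ∀ (t : ℝ), 0 < t → ∀ x : 𝔤, s (t • x) = (t : EReal) * s x)
    (hAdinv : ∀ (g : G) (x : 𝔤), s (Ad g x) = s x) :
    IsOpen {x : 𝔤 | ∃ U ∈ nhds x, ∃ C : ℝ, ∀ y ∈ U, s y ≤ (C : EReal)} ∧
    Convex ℝ {x : 𝔤 | ∃ U ∈ nhds x, ∃ C : ℝ, ∀ y ∈ U, s y ≤ (C : EReal)} ∧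
    (∀ x ∈ {x : 𝔤 | ∃ U ∈ nhds x, ∃ C : ℝ, ∀ y ∈ U, s y ≤ (C : EReal)},
      ∀ t : ℝ, 0 < t → t • x ∈ {x : 𝔤 | ∃ U ∈ nhds x, ∃ C : ℝ, ∀ y ∈ U, s y ≤ (C : EReal)}) ∧
    (∀ (g : G), ∀ x ∈ {x : 𝔤 | ∃ U ∈ nhds x, ∃ C : ℝ, ∀ y ∈ U, s y ≤ (C : EReal)},
      Ad g x ∈ {x : 𝔤 | ∃ U ∈ nhds x, ∃ C : ℝ, ∀ y ∈ U, s y ≤ (C : EReal)}) :=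
  ⟨isOpen_locBddAboveSet s, (locBddAboveCone hsub hhom).convex,
    fun _ hx _ ht => smul_mem_locBddAboveSet hhom ht hx,
    fun g _ hx => (Ad g).toHomeomorph.mem_locBddAboveSet (hAdinv g) hx⟩

/-- For a smooth unitary representation `π` of a Banach–Lie group `G` with Lie algebra `𝔤`
(encoded here by its adjoint action `Ad` on `𝔤` and the function
`s_π(x) = sup Spec(i·cl(dπ(x)))`, which is subadditive, positively homogeneous and
`Ad`-invariant), the set `W_π` of points near which `s_π` is bounded is an open convex
cone invariant under `Ad(G)`. -/
theorem stmt_14 {G 𝔤 : Type*} [Group G] [NormedAddCommGroup 𝔤] [NormedSpace ℝ 𝔤]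
    (Ad : G → 𝔤 ≃L[ℝ] 𝔤)
    (hAd1 : ∀ x : 𝔤, Ad 1 x = x)
    (hAdmul : ∀ (g h : G) (x : 𝔤), Ad (g * h) x = Ad g (Ad h x))
    (s : 𝔤 → EReal)
    (hsub : ∀ x y : 𝔤, s (x + y) ≤ s x + s y)
    (hhom : ∀ (t : ℝ), 0 < t → ∀ x : 𝔤, s (t • x) = (t : EReal) * s x)
    (hAdinv : ∀ (g : G) (x : 𝔤), s (Ad g x) = s x) :
    IsOpen {x : 𝔤 | ∃ U ∈ nhds x, ∃ C : ℝ, ∀ y ∈ U, s y ≤ (C : EReal)} ∧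
    Convex ℝ {x : 𝔤 | ∃ U ∈ nhds x, ∃ C : ℝ, ∀ y ∈ U, s y ≤ (C : EReal)} ∧
    (∀ x ∈ {x : 𝔤 | ∃ U ∈ nhds x, ∃ C : ℝ, ∀ y ∈ U, s y ≤ (C : EReal)},
      ∀ t : ℝ, 0 < t → t • x ∈ {x : 𝔤 | ∃ U ∈ nhds x, ∃ C : ℝ, ∀ y ∈ U, s y ≤ (C : EReal)}) ∧
    (∀ (g : G), ∀ x ∈ {x : 𝔤 | ∃ U ∈ nhds x, ∃ C : ℝ, ∀ y ∈ U, s y ≤ (C : EReal)},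
      Ad g x ∈ {x : 𝔤 | ∃ U ∈ nhds x, ∃ C : ℝ, ∀ y ∈ U, s y ≤ (C : EReal)}) :=
  stmt_14_general Ad s hsub hhom hAdinv
end

section
/- Let g be a Banach–Lie algebra, x ∈ g, and y ∈ g. Then the logarithmic-derivative formula for the exponential map holds in the following integrated form: for a C¹ path α : I → g in an open set where exp is defined, the right logarithmic derivative of t ↦ exp(α(t)) equals ∫₀¹ e^{s·ad α(t)} α'(t) ds; in particular δ(exp)_x(y) = ∫₀¹ e^{s·ad x} y ds. -/
/-!
Differentiating `s ↦ e^{s(A+B)} e^{-sA}` gives Duhamel's formula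
`e^{A+B} e^{-A} - 1 = ∫₀¹ e^{s(A+B)} B e^{-sA} ds`.
Replacing `B` by `εB` and dividing by `ε`, the difference quotient of `ε ↦ e^{A+εB} e^{-A}` at `0`
becomes an integral depending continuously on `ε`. Since `exp` is analytic, hence differentiable,
letting `ε → 0` gives `dexp_A(B) e^{-A} = ∫₀¹ e^{sA} B e^{-sA} ds = ∫₀¹ e^{s·ad A} B ds`,
and the path version follows by the chain rule.
-/

namespace NormedSpace

variable {𝔸 : Type*} [NormedRing 𝔸] [NormedAlgebra ℝ 𝔸] [CompleteSpace 𝔸]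

theorem differentiable_exp : Differentiable ℝ (exp : 𝔸 → 𝔸) :=
  fun A => (exp_analytic A).differentiableAt

theorem exp_mul_exp_neg (A : 𝔸) : exp A * exp (-A) = 1 := by
  rw [← exp_add_of_commute_of_mem_ball (𝕂 := ℝ) (Commute.refl A).neg_right, add_neg_cancel,
    exp_zero] <;> simp [expSeries_radius_eq_top]

theorem exp_neg_mul_exp (A : 𝔸) : exp (-A) * exp A = 1 := by
  simpa using exp_mul_exp_neg (-A)

theorem hasDerivAt_exp_smul_add_mul_exp_neg_smul (A B : 𝔸) (s : ℝ) :
    HasDerivAt (fun s : ℝ => exp (s • (A + B)) * exp (-(s • A)))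
      (exp (s • (A + B)) * B * exp (-(s • A))) s := by
  have hneg : HasDerivAt (fun s : ℝ => exp (-(s • A))) (exp (-(s • A)) * -A) s := by
    simpa only [smul_neg] using hasDerivAt_exp_smul_const (𝕂 := ℝ) (-A) s
  convert (hasDerivAt_exp_smul_const (𝕂 := ℝ) (A + B) s).mul hneg using 1
  · rfl
  have hcomm : Commute A (exp (-(s • A))) :=
    ((Commute.refl A).smul_right s).neg_right.exp_right
  rw [mul_neg, ← hcomm.eq]
  noncomm_ring

theorem exp_add_mul_exp_neg_sub_one (A B : 𝔸) :
    exp (A + B) * exp (-A) - 1 = ∫ s in (0 : ℝ)..1, exp (s • (A + B)) * B * exp (-(s • A)) := by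
  have hcont : Continuous fun s : ℝ => exp (s • (A + B)) * B * exp (-(s • A)) := by
    have := (differentiable_exp (𝔸 := 𝔸)).continuous
    fun_prop
  rw [intervalIntegral.integral_eq_sub_of_hasDerivAt
    (fun s _ => hasDerivAt_exp_smul_add_mul_exp_neg_smul A B s) (hcont.intervalIntegrable 0 1)]
  simp [exp_zero]

theorem fderiv_exp_apply_mul_exp_neg (A B : 𝔸) :
    fderiv ℝ exp A B * exp (-A) = ∫ s in (0 : ℝ)..1, exp (s • A) * B * exp (-(s • A)) := by
  set f := fun ε : ℝ => exp (A + ε • B) * exp (-A)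
  set g := fun ε : ℝ => ∫ s in (0 : ℝ)..1, exp (s • (A + ε • B)) * B * exp (-(s • A))
  have hderiv : HasDerivAt f (fderiv ℝ exp A B * exp (-A)) 0 := by
    refine HasDerivAt.mul_const ?_ _
    refine (differentiable_exp A).hasFDerivAt.comp_hasDerivAt_of_eq 0 ?_ (by simp)
    simpa using ((hasDerivAt_id (0 : ℝ)).smul_const B).const_add A
  have hslope : ∀ ε ≠ (0 : ℝ), slope f 0 ε = g ε := by
    intro ε hε
    simp only [f, g, slope_def_module, sub_zero, zero_smul, add_zero, exp_mul_exp_neg,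
      exp_add_mul_exp_neg_sub_one, mul_smul_comm, smul_mul_assoc, intervalIntegral.integral_smul,
      inv_smul_smul₀ hε]
  have hcont : Continuous g := by
    have := (differentiable_exp (𝔸 := 𝔸)).continuous
    fun_prop
  refine tendsto_nhds_unique (hasDerivAt_iff_tendsto_slope.1 hderiv) ?_
  have hlim := (hcont.tendsto 0).mono_left (nhdsWithin_le_nhds (s := {0}ᶜ))
  simp only [g, zero_smul, add_zero] at hlim
  exact hlim.congr' (eventually_nhdsWithin_of_forall fun ε hε => (hslope ε hε).symm)

end NormedSpace

theorem stmt_19_general {𝔸 : Type*} [NormedRing 𝔸] [NormedAlgebra ℝ 𝔸] [CompleteSpace 𝔸]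
    (I : Set ℝ)
    (α α' : ℝ → 𝔸)
    (hα : ∀ t ∈ I, HasDerivAt α (α' t) t) :
    ∀ t ∈ I,
      HasDerivAt (fun u => NormedSpace.exp (α u))
        ((∫ s in (0 : ℝ)..1,
            NormedSpace.exp (s • α t) * α' t * NormedSpace.exp (-(s • α t))) *
          NormedSpace.exp (α t)) t := by
  intro t ht
  refine ((NormedSpace.differentiable_exp (α t)).hasFDerivAt.comp_hasDerivAt t
    (hα t ht)).congr_deriv ?_
  rw [← NormedSpace.fderiv_exp_apply_mul_exp_neg, mul_assoc, NormedSpace.exp_neg_mul_exp,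
    mul_one]

/-- Logarithmic derivative of the exponential map of a Banach–Lie group (realized as the
unit group of a Banach algebra, where `e^{s·ad x} y = e^{sx} y e^{-sx}`): for a `C¹` path
`α`, the right logarithmic derivative of `t ↦ exp(α(t))` equals
`∫₀¹ e^{s·ad α(t)} α'(t) ds`, i.e.
`d/dt exp(α(t)) = (∫₀¹ e^{s α(t)} α'(t) e^{-s α(t)} ds) · exp(α(t))`;
in particular `δ(exp)_x(y) = ∫₀¹ e^{s·ad x} y ds`. -/
theorem stmt_19 {𝔸 : Type*} [NormedRing 𝔸] [NormedAlgebra ℝ 𝔸] [CompleteSpace 𝔸]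
    (I : Set ℝ) (hI : IsOpen I)
    (α α' : ℝ → 𝔸)
    (hα : ∀ t ∈ I, HasDerivAt α (α' t) t)
    (hα' : ContinuousOn α' I) :
    ∀ t ∈ I,
      HasDerivAt (fun u => NormedSpace.exp (α u))
        ((∫ s in (0 : ℝ)..1,
            NormedSpace.exp (s • α t) * α' t * NormedSpace.exp (-(s • α t))) *
          NormedSpace.exp (α t)) t :=
  stmt_19_general I α α' hα
end
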